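/- arXiv:1802.07298 — 2 statements merged into one kernel-verified Lean document; each statement's English description precedes it below -/
import Mathlib

section
/- The nonnegative orthant is forward closed for a mass-action system satisfying the Hárs–Tóth condition: if f : ℝˢ → ℝˢ is a polynomial vector field such that every monomial of fᵢ with negative coefficient is divisible by xᵢ, and x : [0,T] → ℝˢ is a solution of ẋ = f(x) with x(0) in the open positive orthant, then x(t) ≥ 0 componentwise for all t ∈ [0,T]. -/
/-!
Split each `fᵢ` as `fᵢ = Xᵢ qᵢ + pᵢ`, where `pᵢ` collects the monomials not divisible by `Xᵢ`;
by the Hárs–Tóth condition `pᵢ` has nonnegative coefficients. As long as the solution stays in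
the orthant, `pᵢ(x) ≥ 0` and `qᵢ(x) ≥ -M` for a bound `M` of the `qᵢ` along the compact
trajectory, so `ẋᵢ ≥ -M xᵢ` and `e^{Mt} xᵢ(t)` is nondecreasing. Hence no coordinate can reach
`0` at a first exit time from the open orthant: the solution stays strictly positive.
-/

open MvPolynomial Set

namespace MvPolynomial

variable {σ R : Type*} [CommSemiring R]

theorem eval_nonneg_of_coeff_nonneg [PartialOrder R] [IsOrderedRing R] {p : MvPolynomial σ R}
    (hp : ∀ m, 0 ≤ p.coeff m) {y : σ → R} (hy : 0 ≤ y) : 0 ≤ eval y p := by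
  rw [eval_eq]
  exact Finset.sum_nonneg fun m _ =>
    mul_nonneg (hp m) (Finset.prod_nonneg fun i _ => pow_nonneg (hy i) _)

theorem coeff_modMonomial_single_nonneg [LinearOrder R] {F : MvPolynomial σ R} {i : σ}
    (hF : ∀ m ∈ F.support, F.coeff m < 0 → m i ≠ 0) (m : σ →₀ ℕ) :
    0 ≤ (F.modMonomial (Finsupp.single i 1)).coeff m := by
  by_cases hm : Finsupp.single i 1 ≤ m
  · rw [coeff_modMonomial_of_le _ hm]
  · rw [coeff_modMonomial_of_not_le _ hm]
    have hmi : m i = 0 := by simpa [Finsupp.single_le_iff, Nat.one_le_iff_ne_zero] using hm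
    by_contra! hneg
    exact hF m (mem_support_iff.mpr hneg.ne) hneg hmi

theorem mul_eval_divMonomial_single_le_eval [LinearOrder R] [IsOrderedRing R]
    {F : MvPolynomial σ R} {i : σ} (hF : ∀ m ∈ F.support, F.coeff m < 0 → m i ≠ 0)
    {y : σ → R} (hy : 0 ≤ y) :
    y i * eval y (F.divMonomial (Finsupp.single i 1)) ≤ eval y F := by
  conv_rhs => rw [← divMonomial_add_modMonomial_single F i]
  rw [eval_add, eval_mul, eval_X]
  exact le_add_of_nonneg_right <|
    eval_nonneg_of_coeff_nonneg (coeff_modMonomial_single_nonneg hF) hy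

end MvPolynomial

theorem monotoneOn_exp_mul_of_hasDerivAt_ge {y y' : ℝ → ℝ} {a b M : ℝ}
    (hc : ContinuousOn y (Icc a b)) (hd : ∀ t ∈ Ioo a b, HasDerivAt y (y' t) t)
    (hge : ∀ t ∈ Ioo a b, -(M * y t) ≤ y' t) :
    MonotoneOn (fun t => Real.exp (M * t) * y t) (Icc a b) := by
  have hexp : ∀ t, HasDerivAt (fun t => Real.exp (M * t)) (Real.exp (M * t) * M) t := fun t => by
    simpa using ((hasDerivAt_id t).const_mul M).exp
  refine monotoneOn_of_hasDerivWithinAt_nonneg (convex_Icc a b)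
    (f' := fun t => Real.exp (M * t) * M * y t + Real.exp (M * t) * y' t)
    (fun t _ => (hexp t).continuousAt.continuousWithinAt.mul (hc t ‹_›))
    (fun t ht => ?_) (fun t ht => ?_) <;> rw [interior_Icc] at ht
  · exact ((hexp t).mul (hd t ht)).hasDerivWithinAt
  · rw [mul_assoc, ← mul_add]
    exact mul_nonneg (Real.exp_pos _).le (by linarith [hge t ht])

theorem ContinuousOn.mapsTo_Icc_of_forall_mapsTo_Ico {E : Type*} [TopologicalSpace E]
    {x : ℝ → E} {U : Set E} {a b : ℝ} (hc : ContinuousOn x (Icc a b)) (hU : IsOpen U)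
    (ha : x a ∈ U) (hstep : ∀ t ∈ Ioc a b, MapsTo x (Ico a t) U → x t ∈ U) :
    MapsTo x (Icc a b) U := by
  intro t₀ ht₀
  by_contra hx₀
  set Z := Icc a b ∩ x ⁻¹' Uᶜ
  have hZ : IsClosed Z := hc.preimage_isClosed_of_isClosed isClosed_Icc hU.isClosed_compl
  have hZne : Z.Nonempty := ⟨t₀, ht₀, hx₀⟩
  have hZbdd : BddBelow Z := ⟨a, fun t ht => ht.1.1⟩
  obtain ⟨⟨hat, htb⟩, hxt⟩ := hZ.csInf_mem hZne hZbdd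
  have hlt : a < sInf Z := lt_of_le_of_ne hat fun h => hxt (h ▸ ha)
  refine hxt (hstep _ ⟨hlt, htb⟩ fun τ hτ => ?_)
  by_contra hxτ
  exact (csInf_le hZbdd ⟨⟨hτ.1, hτ.2.le.trans htb⟩, hxτ⟩).not_gt hτ.2

theorem nonneg_orthant_forward_closed_hars_toth_general
    {s : ℕ} (f : Fin s → MvPolynomial (Fin s) ℝ)
    (hHT : ∀ i : Fin s, ∀ m ∈ (f i).support, (f i).coeff m < 0 → m i ≠ 0)
    (T : ℝ) (x : ℝ → Fin s → ℝ)
    (hode : ∀ t ∈ Set.Icc (0:ℝ) T,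
      HasDerivAt x (fun i => MvPolynomial.eval (x t) (f i)) t)
    (hx0 : ∀ i, 0 < x 0 i) :
    ∀ t ∈ Set.Icc (0:ℝ) T, ∀ i, 0 ≤ x t i := by
  have hcont : ContinuousOn x (Icc 0 T) := fun t ht => (hode t ht).continuousAt.continuousWithinAt
  obtain ⟨M, hM⟩ : ∃ M, ∀ t ∈ Icc 0 T,
      ‖fun i => eval (x t) ((f i).divMonomial (Finsupp.single i 1))‖ ≤ M :=
    isCompact_Icc.exists_bound_of_continuousOn <|
      continuousOn_pi.mpr fun i => (continuous_eval _).comp_continuousOn hcont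
  have hpos : MapsTo x (Icc 0 T) (univ.pi fun _ => Ioi 0) := by
    refine hcont.mapsTo_Icc_of_forall_mapsTo_Ico (isOpen_set_pi finite_univ fun _ _ => isOpen_Ioi)
      (fun i _ => hx0 i) fun t ht hprev i _ => ?_
    have hsub : Icc 0 t ⊆ Icc 0 T := Icc_subset_Icc_right ht.2
    have hge : ∀ τ ∈ Ioo 0 t, -(M * x τ i) ≤ eval (x τ) (f i) := fun τ hτ => by
      have hxτ : 0 ≤ x τ := fun j => (hprev (Ioo_subset_Ico_self hτ) j trivial).le
      have hqM := abs_le.mp ((norm_le_pi_norm _ i).trans (hM τ (hsub (Ioo_subset_Icc_self hτ))))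
      have := mul_eval_divMonomial_single_le_eval (hHT i) hxτ
      linarith [mul_le_mul_of_nonneg_left hqM.1 (hxτ i)]
    have hxi : Real.exp (M * 0) * x 0 i ≤ Real.exp (M * t) * x t i :=
      monotoneOn_exp_mul_of_hasDerivAt_ge (((continuous_apply i).comp_continuousOn hcont).mono hsub)
        (fun τ hτ => hasDerivAt_pi.mp (hode τ (hsub (Ioo_subset_Icc_self hτ))) i) hge
        (left_mem_Icc.mpr ht.1.le) (right_mem_Icc.mpr ht.1.le) ht.1.le
    rw [mul_zero, Real.exp_zero, one_mul] at hxi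
    exact pos_of_mul_pos_right ((hx0 i).trans_le hxi) (Real.exp_pos _).le
  exact fun t ht i => (hpos ht i trivial).le

/-- The nonnegative orthant is forward closed for a polynomial vector field satisfying
the Hárs–Tóth condition. -/
theorem nonneg_orthant_forward_closed_hars_toth
    {s : ℕ} (f : Fin s → MvPolynomial (Fin s) ℝ)
    (hHT : ∀ i : Fin s, ∀ m ∈ (f i).support, (f i).coeff m < 0 → m i ≠ 0)
    (T : ℝ) (hT : 0 ≤ T) (x : ℝ → Fin s → ℝ)
    (hode : ∀ t ∈ Set.Icc (0:ℝ) T,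
      HasDerivAt x (fun i => MvPolynomial.eval (x t) (f i)) t)
    (hx0 : ∀ i, 0 < x 0 i) :
    ∀ t ∈ Set.Icc (0:ℝ) T, ∀ i, 0 ≤ x t i :=
  nonneg_orthant_forward_closed_hars_toth_general f hHT T x hode hx0
end

section
/- If points g(d₁),…,g(dᵣ) on a differentiable curve g : ℝ → ℝⁿ are the vertices of a proper face of the convex hull of the image of g, with d₁,…,d_p interior points of the parameter domain D, then the (n+1)×(r+p) matrix whose first r columns are (1, g(dᵢ)) and last p columns are (0, g′(dᵢ)) has rank at most n; i.e. all its (n+1)×(n+1) minors vanish, provided r + p ≥ n+1. -/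
open Matrix

/-!
The supporting functional `ℓ ≤ c` of the face, homogenized to the vector `(-c, ℓ)`, annihilates
every column of the matrix: `ℓ (g dᵢ) = c` because `g dᵢ` lies on the face, and `ℓ (g' dᵢ) = 0`
at interior parameters because `t ↦ ℓ (g t)` attains its maximum over `D` at `dᵢ`. A nonzero
vector in the left kernel drops the rank below the number of rows.
-/

theorem Matrix.rank_lt_card_height_of_vecMul_eq_zero {m n R : Type*} [Field R] [Fintype m]
    [Fintype n] {M : Matrix m n R} {u : m → R} (hu : u ≠ 0) (h : u ᵥ* M = 0) :
    M.rank < Fintype.card m := by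
  have hli : LinearIndependent R (replicateRow (Fin 1) u).row := linearIndependent_unique_iff.mpr hu
  have hrow : (replicateRow (Fin 1) u).rank = 1 := by
    rw [hli.rank_matrix, Fintype.card_fin]
  have hmul : replicateRow (Fin 1) u * M = 0 := by
    rw [← replicateRow_vecMul, h, replicateRow_zero]
  have := rank_add_rank_le_card_of_mul_eq_zero hmul
  omega

theorem IsMaxOn.map_hasDerivAt_eq_zero {E : Type*} [NormedAddCommGroup E] [NormedSpace ℝ E]
    [FiniteDimensional ℝ E] {D : Set ℝ} {g : ℝ → E} {g' : E} {t : ℝ} {ℓ : E →ₗ[ℝ] ℝ}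
    (hmax : IsMaxOn (ℓ ∘ g) D t) (ht : t ∈ interior D) (hg : HasDerivAt g g' t) : ℓ g' = 0 :=
  (hmax.isLocalMax (mem_interior_iff_mem_nhds.mp ht)).hasDerivAt_eq_zero
    (ℓ.toContinuousLinearMap.hasFDerivAt.comp_hasDerivAt t hg)

/-- Vinzant's face-vertex matrix condition: if g(d₁),…,g(dᵣ) are points of a proper
(exposed) face of the convex hull of the curve g over D, with the first p parameters
interior to D, then the (n+1)×(r+p) matrix with columns (1, g(dᵢ)) and (0, g′(dᵢ))
has rank at most n, so all its (n+1)×(n+1) minors vanish. -/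
theorem face_vertex_matrix_rank_le
    {n r p : ℕ} (D : Set ℝ)
    (g g' : ℝ → Fin n → ℝ)
    (hg : ∀ t ∈ D, HasDerivAt g (g' t) t)
    (d : Fin r → ℝ)
    (hpr : p ≤ r)
    (hint : ∀ i : Fin r, (i : ℕ) < p → d i ∈ interior D)
    (ℓ : (Fin n → ℝ) →ₗ[ℝ] ℝ) (c : ℝ) (hℓ : ℓ ≠ 0)
    (hsupp : ∀ x ∈ g '' D, ℓ x ≤ c)
    (hface : ∀ i : Fin r, ℓ (g (d i)) = c) :
    (Matrix.of (fun (a : Fin (n + 1)) (b : Fin (r + p)) =>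
      if h : (b : ℕ) < r then (Fin.cons (1 : ℝ) (g (d ⟨b, h⟩)) : Fin (n + 1) → ℝ) a
      else (Fin.cons (0 : ℝ) (g' (d ⟨(b : ℕ) - r,
        by omega⟩)) : Fin (n + 1) → ℝ) a)).rank ≤ n := by
  set w := (dotProductEquiv ℝ (Fin n)).symm ℓ
  have hℓw (x : Fin n → ℝ) : ℓ x = w ⬝ᵥ x := by
    rw [← dotProductEquiv_apply_apply, LinearEquiv.apply_symm_apply]
  have hderiv (i : Fin r) (hi : (i : ℕ) < p) : ℓ (g' (d i)) = 0 := by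
    have hmax : IsMaxOn (ℓ ∘ g) D (d i) := fun t ht => by
      simpa only [Set.mem_ofPred_eq, Function.comp_apply, hface i] using
        hsupp _ (Set.mem_image_of_mem g ht)
    exact hmax.map_hasDerivAt_eq_zero (hint i hi) (hg _ (interior_subset (hint i hi)))
  refine Nat.le_of_lt_succ ?_
  convert rank_lt_card_height_of_vecMul_eq_zero (u := vecCons (-c) w) ?_ ?_
  · exact (Fintype.card_fin _).symm
  · simp [w, hℓ]
  · ext b
    by_cases hb : (b : ℕ) < r
    · simp only [vecMul, of_apply, hb, dif_pos, Pi.zero_apply]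
      erw [cons_dotProduct_cons, ← hℓw, hface]
      ring
    · simp only [vecMul, of_apply, hb, dif_neg, not_false_eq_true, Pi.zero_apply]
      erw [cons_dotProduct_cons, ← hℓw, hderiv _ (by dsimp only; omega)]
      ring
end
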